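/- Let k ∈ ℤ with k ≤ -2. The first Čech cohomology of CP¹ with coefficients in O(k), computed with the standard two-set cover {λ₀ ≠ 0}, {λ₁ ≠ 0}, i.e. the quotient of Laurent series Σ_{j∈ℤ} c_j ζ^j of homogeneity-k sections on the overlap by the sum of Taylor series Σ_{j≥0} a_j ζ^j and Σ_{j≥0} b_j ζ^{k-j} pieces holomorphic on each chart, is a complex vector space of dimension -k-1, spanned by the classes of ζ^{-1}, ζ^{-2}, ..., ζ^{k+1}. -/

import Mathlib

/-!
The first chart contributes exactly the exponents `j ≥ 0` and the second exactly `j ≤ k`, so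
the coboundaries are the Laurent polynomials supported off `{k+1, …, -1}`. The quotient by
them is therefore the free module on the monomials `ζ^j`, `k + 1 ≤ j ≤ -1`.
-/

/-- Čech coboundaries in the two-chart model of `H¹(ℂP¹, O(k))`: formal Laurent series
(finitely supported coefficient families `c : ℤ →₀ ℂ`) which split as `h₀ + h₁` with
`h₀ = Σ_{j ≥ 0} a_j ζ^j` holomorphic on the chart around `ζ = 0` and
`h₁ = Σ_{j ≤ k} b_j ζ^j` holomorphic (as a section of `O(k)`) on the chart around
`ζ = ∞`. -/
noncomputable def cechCoboundaries (k : ℤ) : Submodule ℂ (ℤ →₀ ℂ) where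
  carrier := {c | ∃ a b : ℤ →₀ ℂ, (∀ j : ℤ, j < 0 → a j = 0) ∧
    (∀ j : ℤ, k < j → b j = 0) ∧ c = a + b}
  add_mem' := by
    rintro c d ⟨a1, b1, ha1, hb1, rfl⟩ ⟨a2, b2, ha2, hb2, rfl⟩
    refine ⟨a1 + a2, b1 + b2, ?_, ?_, by abel⟩
    · intro j hj; simp [ha1 j hj, ha2 j hj]
    · intro j hj; simp [hb1 j hj, hb2 j hj]
  zero_mem' := ⟨0, 0, by simp, by simp, by simp⟩
  smul_mem' := by
    rintro r c ⟨a, b, ha, hb, rfl⟩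
    refine ⟨r • a, r • b, ?_, ?_, by simp [smul_add]⟩
    · intro j hj; simp [ha j hj]
    · intro j hj; simp [hb j hj]

namespace Finsupp

variable {α R : Type*} [CommRing R] (s : Set α)

theorem isCompl_supported_compl_supported :
    IsCompl (supported R R sᶜ) (supported R R s) :=
  ⟨disjoint_supported_supported isCompl_compl.symm.disjoint,
    codisjoint_supported_supported isCompl_compl.symm.codisjoint⟩

noncomputable def quotientSupportedComplEquiv :
    ((α →₀ R) ⧸ supported R R sᶜ) ≃ₗ[R] (s →₀ R) :=
  (Submodule.quotientEquivOfIsCompl _ _ (isCompl_supported_compl_supported s)).trans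
    (supportedEquivFinsupp s)

theorem span_mkQ_single_eq_top :
    Submodule.span R ((fun j => (supported R R sᶜ).mkQ (single j 1)) '' s) = ⊤ := by
  rw [← Set.image_image, ← Submodule.map_span, ← supported_eq_span_single,
    Submodule.map_mkQ_eq_top]
  exact (isCompl_supported_compl_supported s).codisjoint.eq_top

end Finsupp

theorem cechCoboundaries_eq_supported (k : ℤ) :
    cechCoboundaries k = Finsupp.supported ℂ ℂ (Set.Icc (k + 1) (-1))ᶜ := by
  have hcompl : (Set.Icc (k + 1) (-1))ᶜ = Set.Ici 0 ∪ Set.Iic k := by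
    ext j; simp only [Set.mem_compl_iff, Set.mem_Icc, Set.mem_union, Set.mem_Ici,
      Set.mem_Iic]; omega
  ext c
  simp only [hcompl, Finsupp.supported_union, Submodule.mem_sup, Finsupp.mem_supported',
    Set.mem_Ici, Set.mem_Iic, not_le]
  constructor
  · rintro ⟨a, b, ha, hb, rfl⟩
    exact ⟨a, ha, b, hb, rfl⟩
  · rintro ⟨a, ha, b, hb, rfl⟩
    exact ⟨a, b, ha, hb, rfl⟩

theorem stmt9_general (k : ℤ) :
    Module.finrank ℂ ((ℤ →₀ ℂ) ⧸ cechCoboundaries k) = (-k - 1).toNat ∧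
    Submodule.span ℂ
      ((fun j : ℤ => Submodule.Quotient.mk (p := cechCoboundaries k)
        (Finsupp.single j (1 : ℂ))) '' (Set.Icc (k + 1) (-1))) = ⊤ := by
  rw [cechCoboundaries_eq_supported]
  refine ⟨?_, Finsupp.span_mkQ_single_eq_top _⟩
  rw [(Finsupp.quotientSupportedComplEquiv _).finrank_eq, Module.finrank_finsupp_self,
    Fintype.card_Icc, Int.card_Icc]
  congr 1
  omega

/-- For `k ≤ -2`, the two-chart Čech model of `H¹(ℂP¹, O(k))` — the quotient
of Laurent series on the overlap by coboundaries — is a complex vector space of dimension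
`-k-1`, spanned by the classes of the monomials `ζ^{-1}, ζ^{-2}, ..., ζ^{k+1}`. -/
theorem stmt9 (k : ℤ) (hk : k ≤ -2) :
    Module.finrank ℂ ((ℤ →₀ ℂ) ⧸ cechCoboundaries k) = (-k - 1).toNat ∧
    Submodule.span ℂ
      ((fun j : ℤ => Submodule.Quotient.mk (p := cechCoboundaries k)
        (Finsupp.single j (1 : ℂ))) '' (Set.Icc (k + 1) (-1))) = ⊤ :=
  stmt9_general k
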